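/- arXiv:1212.5839 — 3 statements merged into one kernel-verified Lean document; each statement's English description precedes it below -/
import Mathlib

section
/- For a 3-dimensional almost paracontact metric manifold M with structure (φ, ξ, η, g) and Levi-Civita connection ∇, the following three conditions are mutually equivalent: (a) M is normal; (b) there exist smooth functions α, β on M such that (∇_X φ)Y = β(g(X,Y)ξ − η(Y)X) + α(g(φX,Y)ξ − η(Y)φX) for all vector fields X, Y; (c) there exist smooth functions α, β on M such that ∇_X ξ = α(X − η(X)ξ) + β φX for all vector fields X. -/
/-!
In dimension 3 the distribution `ker η` has rank 2, so every alternating form annihilated by `ξ`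
is a multiple of the fundamental form `Φ(y, z) = g(y, φz)`: in an orthonormal frame both are
multiples of `det(ξ, ·, ·)`. The difference `ω` of the two sides of
`(∇ₓφ)y = g(φ∇ₓξ, y)ξ − η(y)φ∇ₓξ`, paired with `g`, is such a form, and differentiating the
compatibility of `g` with `φ` gives `ω(y, φz) = −ω(z, φy)`; for a multiple of `Φ` this forces
`ω = 0`, which proves the identity. It turns `N⁽¹⁾` into an expression in `φ∘∇ξ∘φ − ∇ξ`, so `M`
is normal iff `∇ξ` commutes with `φ`. The same fact, applied to the skew part and to the
`φ`-twisted symmetric part of `g(∇_yξ, z)`, shows that the endomorphisms commuting with `φ` and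
killing `ξ` are exactly `α(id − η ⊗ ξ) + βφ`. Finally `(b)` at `y = ξ` gives `(c)`, and `(c)`
gives `(b)` through the identity for `∇φ`.
-/

/-- A 3-dimensional almost paracontact metric manifold, presented algebraically
(Koszul style): `C` is the commutative ℝ-algebra of smooth functions on `M`,
`X` is the `C`-module of vector fields on `M` (with a global `g`-orthonormal
frame of signature `(2,1)`, i.e. `(+,+,-)`), `act` is the action of vector
fields on functions by derivation, `bracket` the Lie bracket, `g` the
pseudo-Riemannian metric, `nabla` its Levi-Civita connection and
`(phi, xi, eta)` the almost paracontact structure, so that `η(ξ) = 1`,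
`φ² = Id − η ⊗ ξ`, `η(X) = g(X,ξ)` and `g(φX,φY) = −g(X,Y) + η(X)η(Y)`. -/
structure APCMM3 (C : Type*) (X : Type*) [CommRing C] [Algebra ℝ C]
    [AddCommGroup X] [Module C X] where
  act : X → C → C
  bracket : X → X → X
  g : X →ₗ[C] X →ₗ[C] C
  phi : X →ₗ[C] X
  xi : X
  eta : X →ₗ[C] C
  nabla : X → X → X
  act_add : ∀ x y f, act (x + y) f = act x f + act y f
  act_smul : ∀ (h : C) x f, act (h • x) f = h * act x f
  act_addf : ∀ x f₁ f₂, act x (f₁ + f₂) = act x f₁ + act x f₂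
  act_mul : ∀ x f₁ f₂, act x (f₁ * f₂) = act x f₁ * f₂ + f₁ * act x f₂
  act_algebraMap : ∀ x (r : ℝ), act x (algebraMap ℝ C r) = 0
  bracket_antisymm : ∀ x y, bracket x y = -bracket y x
  bracket_act : ∀ x y f, act (bracket x y) f = act x (act y f) - act y (act x f)
  g_symm : ∀ x y, g x y = g y x
  eta_def : ∀ x, eta x = g x xi
  eta_xi : eta xi = 1
  phi_xi : phi xi = 0
  phi_sq : ∀ x, phi (phi x) = x - eta x • xi
  compat : ∀ x y, g (phi x) (phi y) = -(g x y) + eta x * eta y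
  frame : ∃ e : Module.Basis (Fin 3) C X,
    g (e 0) (e 0) = 1 ∧ g (e 1) (e 1) = 1 ∧ g (e 2) (e 2) = -1 ∧
    g (e 0) (e 1) = 0 ∧ g (e 0) (e 2) = 0 ∧ g (e 1) (e 2) = 0
  nabla_add_left : ∀ x y z, nabla (x + y) z = nabla x z + nabla y z
  nabla_smul_left : ∀ (f : C) x z, nabla (f • x) z = f • nabla x z
  nabla_add_right : ∀ x y z, nabla x (y + z) = nabla x y + nabla x z
  nabla_smul_right : ∀ (f : C) x y, nabla x (f • y) = act x f • y + f • nabla x y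
  torsion_free : ∀ x y, nabla x y - nabla y x = bracket x y
  metric_compat : ∀ x y z, act x (g y z) = g (nabla x y) z + g y (nabla x z)

variable {C X : Type*} [CommRing C] [Algebra ℝ C] [AddCommGroup X] [Module C X]

/-- The normality tensor
`N⁽¹⁾(X,Y) = [φ,φ](X,Y) − 2dη(X,Y)ξ`, where
`[φ,φ](X,Y) = φ²[X,Y] + [φX,φY] − φ[φX,Y] − φ[X,φY]` and
`2dη(X,Y) = X(η(Y)) − Y(η(X)) − η([X,Y])`. -/
def APCMM3.N1 (M : APCMM3 C X) (x y : X) : X :=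
  M.phi (M.phi (M.bracket x y)) + M.bracket (M.phi x) (M.phi y)
    - M.phi (M.bracket (M.phi x) y) - M.phi (M.bracket x (M.phi y))
    - (M.act x (M.eta y) - M.act y (M.eta x) - M.eta (M.bracket x y)) • M.xi

/-- `M` is normal if `N⁽¹⁾` vanishes identically. -/
def APCMM3.Normal (M : APCMM3 C X) : Prop := ∀ x y, M.N1 x y = 0

namespace APCMM3

variable (M : APCMM3 C X)

lemma inv_two_mul_two : (algebraMap ℝ C 2⁻¹ * 2 : C) = 1 := by
  rw [← map_ofNat (algebraMap ℝ C) 2, ← map_mul]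
  norm_num

lemma eq_inv_two_mul_of_two_mul_eq {u v : C} (h : 2 * u = v) : u = algebraMap ℝ C 2⁻¹ * v := by
  linear_combination algebraMap ℝ C 2⁻¹ * h - u * inv_two_mul_two (C := C)

lemma eq_zero_of_two_mul_eq_zero {u : C} (h : 2 * u = 0) : u = 0 := by
  simpa using eq_inv_two_mul_of_two_mul_eq h

lemma act_zero (x : X) : M.act x 0 = 0 := by
  simpa using M.act_algebraMap x 0

lemma act_one (x : X) : M.act x 1 = 0 := by
  simpa using M.act_algebraMap x 1

lemma act_neg (x : X) (f : C) : M.act x (-f) = -M.act x f := by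
  have h := M.act_addf x f (-f)
  rw [add_neg_cancel, M.act_zero] at h
  linear_combination -h

lemma nabla_zero_right (x : X) : M.nabla x 0 = 0 := by
  simpa using (M.nabla_add_right x 0 0).symm

def nablaXi : Module.End C X where
  toFun x := M.nabla x M.xi
  map_add' x y := M.nabla_add_left x y M.xi
  map_smul' f x := M.nabla_smul_left f x M.xi

lemma nablaXi_apply (x : X) : M.nablaXi x = M.nabla x M.xi := rfl

lemma g_xi_left (y : X) : M.g M.xi y = M.eta y := by
  rw [M.g_symm, M.eta_def]

lemma g_xi_xi : M.g M.xi M.xi = 1 := by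
  rw [M.g_xi_left, M.eta_xi]

lemma eta_phi (x : X) : M.eta (M.phi x) = 0 := by
  have h : M.phi (M.phi (M.phi x)) = M.phi x := by
    rw [M.phi_sq x, map_sub, map_smul, M.phi_xi, smul_zero, sub_zero]
  have h' := congrArg M.eta (M.phi_sq (M.phi x))
  rw [h, map_sub, map_smul, M.eta_xi, smul_eq_mul, mul_one] at h'
  linear_combination h'

lemma g_phi_left (x y : X) : M.g (M.phi x) y = -M.g x (M.phi y) := by
  have h := M.compat x (M.phi y)
  rwa [M.eta_phi, mul_zero, add_zero, M.phi_sq, map_sub, map_smul, ← M.eta_def,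
    M.eta_phi, smul_zero, sub_zero] at h

lemma g_phi_phi_right (y z : X) : M.g y (M.phi (M.phi z)) = M.g y z - M.eta y * M.eta z := by
  rw [M.phi_sq, map_sub, map_smul, smul_eq_mul, M.eta_def y]
  ring

lemma g_nabla_xi_xi (x : X) : M.g (M.nabla x M.xi) M.xi = 0 := by
  have h := M.metric_compat x M.xi M.xi
  rw [M.g_xi_xi, M.act_one, M.g_symm M.xi] at h
  exact eq_zero_of_two_mul_eq_zero (by linear_combination -h)

lemma eta_nablaXi (x : X) : M.eta (M.nablaXi x) = 0 := by
  rw [M.eta_def, nablaXi_apply, M.g_nabla_xi_xi]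

def Phi : X →ₗ[C] X →ₗ[C] C := M.g.compl₂ M.phi

lemma Phi_apply (y z : X) : M.Phi y z = M.g y (M.phi z) := rfl

lemma Phi_swap (y z : X) : M.Phi y z = -M.Phi z y := by
  rw [Phi_apply, Phi_apply, M.g_symm, M.g_phi_left]

lemma Phi_xi (z : X) : M.Phi M.xi z = 0 := by
  rw [Phi_apply, M.g_xi_left, M.eta_phi]

def IsOrthonormal (e : Module.Basis (Fin 3) C X) : Prop :=
  M.g (e 0) (e 0) = 1 ∧ M.g (e 1) (e 1) = 1 ∧ M.g (e 2) (e 2) = -1 ∧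
    M.g (e 0) (e 1) = 0 ∧ M.g (e 0) (e 2) = 0 ∧ M.g (e 1) (e 2) = 0

lemma exists_isOrthonormal : ∃ e, M.IsOrthonormal e := M.frame

section Frame

variable {M} {e : Module.Basis (Fin 3) C X}

lemma _root_.Module.Basis.eq_fin_three_sum {R V : Type*} [CommRing R] [AddCommGroup V]
    [Module R V] (e : Module.Basis (Fin 3) R V) (v : V) :
    v = e.repr v 0 • e 0 + e.repr v 1 • e 1 + e.repr v 2 • e 2 := by
  rw [← Fin.sum_univ_three (fun i => e.repr v i • e i), e.sum_repr]

lemma IsOrthonormal.g_eq (he : M.IsOrthonormal e) (y z : X) :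
    M.g y z = e.repr y 0 * e.repr z 0 + e.repr y 1 * e.repr z 1 - e.repr y 2 * e.repr z 2 := by
  obtain ⟨h00, h11, h22, h01, h02, h12⟩ := he
  have h10 : M.g (e 1) (e 0) = 0 := by rw [M.g_symm, h01]
  have h20 : M.g (e 2) (e 0) = 0 := by rw [M.g_symm, h02]
  have h21 : M.g (e 2) (e 1) = 0 := by rw [M.g_symm, h12]
  conv_lhs => rw [e.eq_fin_three_sum y, e.eq_fin_three_sum z]
  simp only [map_add, map_smul, LinearMap.add_apply, LinearMap.smul_apply, smul_eq_mul,
    h00, h11, h22, h01, h02, h12, h10, h20, h21]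
  ring

lemma IsOrthonormal.xi_norm (he : M.IsOrthonormal e) :
    e.repr M.xi 0 * e.repr M.xi 0 + e.repr M.xi 1 * e.repr M.xi 1
      - e.repr M.xi 2 * e.repr M.xi 2 = 1 := by
  rw [← he.g_eq, M.g_xi_xi]

lemma IsOrthonormal.exists_eq_mul_det (he : M.IsOrthonormal e) (ω : X →ₗ[C] X →ₗ[C] C)
    (hswap : ∀ y z, ω y z = -ω z y) (hxi : ∀ z, ω M.xi z = 0) :
    ∃ k : C, ∀ y z, ω y z = k * e.det ![M.xi, y, z] := by
  set a := e.repr M.xi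
  have hdiag : ∀ i, ω (e i) (e i) = 0 := fun i =>
    eq_zero_of_two_mul_eq_zero (by linear_combination hswap (e i) (e i))
  have h10 := hswap (e 1) (e 0)
  have h21 := hswap (e 2) (e 1)
  have h02 := hswap (e 0) (e 2)
  have hrow : ∀ j, a 0 * ω (e 0) (e j) + a 1 * ω (e 1) (e j) + a 2 * ω (e 2) (e j) = 0 := by
    intro j
    have h := hxi (e j)
    rwa [e.eq_fin_three_sum M.xi, map_add, map_add, map_smul, map_smul, map_smul] at h
  have row0 := hrow 0
  have row1 := hrow 1
  have row2 := hrow 2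
  simp only [hdiag, h10, h21, h02] at row0 row1 row2
  have hnorm := he.xi_norm
  set k := a 0 * ω (e 1) (e 2) + a 1 * ω (e 2) (e 0) - a 2 * ω (e 0) (e 1)
  have hp : ω (e 1) (e 2) = k * a 0 := by
    linear_combination a 1 * row2 + a 2 * row1 - ω (e 1) (e 2) * hnorm
  have hq : ω (e 2) (e 0) = k * a 1 := by
    linear_combination -a 0 * row2 - a 2 * row0 - ω (e 2) (e 0) * hnorm
  have hr : ω (e 0) (e 1) = k * a 2 := by
    linear_combination a 0 * row1 - a 1 * row0 - ω (e 0) (e 1) * hnorm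
  refine ⟨k, fun y z => ?_⟩
  have hdet : e.det ![M.xi, y, z] = a 0 * (e.repr y 1 * e.repr z 2 - e.repr y 2 * e.repr z 1)
      - a 1 * (e.repr y 0 * e.repr z 2 - e.repr y 2 * e.repr z 0)
      + a 2 * (e.repr y 0 * e.repr z 1 - e.repr y 1 * e.repr z 0) := by
    rw [Module.Basis.det_apply, Matrix.det_fin_three]
    simp [a, Module.Basis.toMatrix_apply]
    ring
  rw [hdet]
  conv_lhs => rw [e.eq_fin_three_sum y, e.eq_fin_three_sum z]
  simp only [map_add, map_smul, LinearMap.add_apply, LinearMap.smul_apply, smul_eq_mul,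
    hdiag, h10, h21, h02]
  linear_combination (e.repr y 1 * e.repr z 2 - e.repr y 2 * e.repr z 1) * hp
    + (e.repr y 2 * e.repr z 0 - e.repr y 0 * e.repr z 2) * hq
    + (e.repr y 0 * e.repr z 1 - e.repr y 1 * e.repr z 0) * hr

lemma IsOrthonormal.Phi_trace (he : M.IsOrthonormal e) :
    M.Phi (e 0) (M.phi (e 0)) + M.Phi (e 1) (M.phi (e 1)) - M.Phi (e 2) (M.phi (e 2)) = 2 := by
  have hnorm := he.xi_norm
  simp [Phi_apply, M.g_phi_phi_right, M.eta_def, he.g_eq]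
  linear_combination -hnorm

end Frame

lemma eq_zero_of_forall_g_eq_zero {v : X} (h : ∀ z, M.g v z = 0) : v = 0 := by
  obtain ⟨e, he⟩ := M.exists_isOrthonormal
  have h0 := h (e 0); have h1 := h (e 1); have h2 := h (e 2)
  rw [IsOrthonormal.g_eq he] at h0 h1 h2
  simp [Module.Basis.repr_self] at h0 h1 h2
  rw [e.eq_fin_three_sum v, h0, h1, h2]
  simp

lemma exists_eq_mul_Phi (ω : X →ₗ[C] X →ₗ[C] C) (hswap : ∀ y z, ω y z = -ω z y)
    (hxi : ∀ z, ω M.xi z = 0) : ∃ f : C, ∀ y z, ω y z = f * M.Phi y z := by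
  obtain ⟨e, he⟩ := M.exists_isOrthonormal
  -- `ω = k ν` and `Φ = l ν` with `ν = det(ξ, ·, ·)`; the frame trace of `Φ(·, φ ·)` is `2`.
  obtain ⟨k, hk⟩ := he.exists_eq_mul_det ω hswap hxi
  obtain ⟨l, hl⟩ := he.exists_eq_mul_det M.Phi M.Phi_swap M.Phi_xi
  refine ⟨algebraMap ℝ C 2⁻¹
    * (ω (e 0) (M.phi (e 0)) + ω (e 1) (M.phi (e 1)) - ω (e 2) (M.phi (e 2))), fun y z => ?_⟩
  rw [mul_assoc]
  refine eq_inv_two_mul_of_two_mul_eq ?_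
  set ν := fun y z => e.det ![M.xi, y, z]
  linear_combination 2 * hk y z
    - M.Phi y z * (hk (e 0) (M.phi (e 0)) + hk (e 1) (M.phi (e 1)) - hk (e 2) (M.phi (e 2)))
    - k * ν y z * he.Phi_trace
    + k * ν y z * (hl (e 0) (M.phi (e 0)) + hl (e 1) (M.phi (e 1)) - hl (e 2) (M.phi (e 2)))
    - k * (ν (e 0) (M.phi (e 0)) + ν (e 1) (M.phi (e 1)) - ν (e 2) (M.phi (e 2))) * hl y z

/-- `(y, z) ↦ g((∇ₓφ)y − g(φ∇ₓξ, y)ξ + η(y)φ∇ₓξ, z)`. -/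
def nablaPhiResidual (x : X) : X →ₗ[C] X →ₗ[C] C :=
  LinearMap.mk₂ C
    (fun y z => M.g (M.nabla x (M.phi y) - M.phi (M.nabla x y)) z
      + M.eta y * M.g (M.phi (M.nablaXi x)) z - M.eta z * M.g (M.phi (M.nablaXi x)) y)
    (fun y y' z => by
      simp only [map_add, M.nabla_add_right, map_sub, LinearMap.add_apply, LinearMap.sub_apply]
      ring)
    (fun f y z => by
      simp only [map_smul, M.nabla_smul_right, map_add, map_sub, smul_eq_mul,
        LinearMap.add_apply, LinearMap.sub_apply, LinearMap.smul_apply]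
      ring)
    (fun y z z' => by
      simp only [map_add]
      ring)
    (fun f y z => by
      simp only [map_smul, smul_eq_mul]
      ring)

lemma nablaPhiResidual_apply (x y z : X) : M.nablaPhiResidual x y z =
    M.g (M.nabla x (M.phi y) - M.phi (M.nabla x y)) z
      + M.eta y * M.g (M.phi (M.nablaXi x)) z - M.eta z * M.g (M.phi (M.nablaXi x)) y := rfl

lemma nablaPhiResidual_swap (x y z : X) :
    M.nablaPhiResidual x y z = -M.nablaPhiResidual x z y := by
  -- differentiate `g(φy, z) = -g(y, φz)` along `x`
  have h1 := M.metric_compat x (M.phi y) z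
  have h2 := M.metric_compat x y (M.phi z)
  have h4 := congrArg (M.act x) (M.g_phi_left y z)
  rw [M.act_neg] at h4
  have h5 := M.g_phi_left (M.nabla x y) z
  have h6 := M.g_phi_left (M.nabla x z) y
  have h7 := M.g_symm (M.phi y) (M.nabla x z)
  have h8 := M.g_symm y (M.nabla x (M.phi z))
  simp only [nablaPhiResidual_apply, map_sub, LinearMap.sub_apply]
  linear_combination (-1 : C) * h1 - h2 - h5 - h6 - h7 - h8 + h4

lemma nablaPhiResidual_xi (x z : X) : M.nablaPhiResidual x M.xi z = 0 := by
  rw [nablaPhiResidual_apply, M.phi_xi, M.nabla_zero_right, M.eta_xi, M.eta_def z, M.g_symm z,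
    ← M.eta_def, M.eta_phi, ← nablaXi_apply]
  simp

lemma nablaPhiResidual_phi_add_phi (x y z : X) :
    M.nablaPhiResidual x y (M.phi z) + M.nablaPhiResidual x z (M.phi y) = 0 := by
  -- differentiate `g(φy, φz) = -g(y, z) + η(y)η(z)` along `x`
  have h1 := M.metric_compat x (M.phi y) (M.phi z)
  have h3 := congrArg (M.act x) (M.compat y z)
  rw [M.act_addf, M.act_neg, M.act_mul, M.eta_def y, M.eta_def z] at h3
  have h4 := M.metric_compat x y z
  have h5 := M.metric_compat x y M.xi
  have h6 := M.metric_compat x z M.xi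
  have c1 := M.compat (M.nabla x y) z
  have c2 := M.compat (M.nabla x z) y
  have c3 := M.compat (M.nabla x M.xi) z
  have c4 := M.compat (M.nabla x M.xi) y
  rw [M.eta_def, M.eta_def] at c1 c2 c3 c4
  have hAx := M.g_nabla_xi_xi x
  have s1 := M.g_symm (M.phi y) (M.nabla x (M.phi z))
  have s2 := M.g_symm y (M.nabla x z)
  have s3 := M.g_symm y (M.nabla x M.xi)
  have s4 := M.g_symm z (M.nabla x M.xi)
  simp only [nablaPhiResidual_apply, nablaXi_apply, map_sub, LinearMap.sub_apply, M.eta_def,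
    M.g_phi_left _ M.xi, M.phi_xi, map_zero, neg_zero]
  linear_combination (-1 : C) * h1 - s1 - c1 - c2 + (M.g y M.xi) * c3 + (M.g z M.xi) * c4
    + h3 - h4 - s2 + (M.g z M.xi) * h5 + (M.g z M.xi) * s3 + (M.g y M.xi) * h6
    + (M.g y M.xi) * s4 + (2 * M.g y M.xi * M.g z M.xi) * hAx

lemma nablaPhiResidual_eq_zero (x y z : X) : M.nablaPhiResidual x y z = 0 := by
  obtain ⟨f, hf⟩ := M.exists_eq_mul_Phi (M.nablaPhiResidual x) (M.nablaPhiResidual_swap x)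
    (M.nablaPhiResidual_xi x)
  -- `f Φ(u, φv) = f (g(u, v) - η(u)η(v))` is symmetric in `u, v`, and antisymmetric by the above
  have hf0 : ∀ u v, f * (M.g u v - M.eta u * M.eta v) = 0 := fun u v => by
    have h := M.nablaPhiResidual_phi_add_phi x u v
    rw [hf, hf, Phi_apply, Phi_apply, M.g_phi_phi_right, M.g_phi_phi_right, M.g_symm v u] at h
    exact eq_zero_of_two_mul_eq_zero (by linear_combination h)
  have h := hf0 y (M.phi z)
  rwa [M.eta_phi, mul_zero, sub_zero, ← Phi_apply, ← hf] at h

lemma nabla_phi_eq (x y : X) :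
    M.nabla x (M.phi y) - M.phi (M.nabla x y)
      = M.g (M.phi (M.nablaXi x)) y • M.xi - M.eta y • M.phi (M.nablaXi x) := by
  rw [← sub_eq_zero]
  refine M.eq_zero_of_forall_g_eq_zero fun z => ?_
  have h := M.nablaPhiResidual_eq_zero x y z
  simp only [nablaPhiResidual_apply, map_sub, map_smul, LinearMap.sub_apply,
    LinearMap.smul_apply, smul_eq_mul, M.g_xi_left] at h ⊢
  linear_combination h

def normalityDefect : Module.End C X := M.phi * M.nablaXi * M.phi - M.nablaXi

lemma normalityDefect_apply (x : X) :
    M.normalityDefect x = M.phi (M.nablaXi (M.phi x)) - M.nablaXi x := rfl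

lemma eta_normalityDefect (x : X) : M.eta (M.normalityDefect x) = 0 := by
  rw [normalityDefect_apply, map_sub, M.eta_phi, M.eta_nablaXi, sub_zero]

lemma N1_eq (x y : X) :
    M.N1 x y = (M.g (M.normalityDefect x) y - M.g (M.normalityDefect y) x) • M.xi
      + M.eta x • M.normalityDefect y - M.eta y • M.normalityDefect x := by
  have nabla_phi : ∀ u v, M.nabla u (M.phi v) = M.phi (M.nabla u v)
      + (M.g (M.phi (M.nablaXi u)) v • M.xi - M.eta v • M.phi (M.nablaXi u)) := fun u v => by
    rw [← M.nabla_phi_eq]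
    abel
  have act_eta : ∀ u v, M.act u (M.eta v) = M.g (M.nabla u v) M.xi + M.g (M.nablaXi u) v := by
    intro u v
    rw [M.eta_def, M.metric_compat, M.g_symm v, nablaXi_apply]
  simp only [N1, normalityDefect_apply, ← M.torsion_free]
  rw [nabla_phi (M.phi x) y, nabla_phi (M.phi y) x, nabla_phi y x, nabla_phi x y,
    act_eta x y, act_eta y x]
  simp only [map_add, map_sub, map_smul, M.phi_sq, M.phi_xi, smul_zero, LinearMap.sub_apply,
    M.eta_def, nablaXi_apply, M.g_nabla_xi_xi]
  module

lemma normal_iff_normalityDefect_eq_zero : M.Normal ↔ M.normalityDefect = 0 := by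
  refine ⟨fun hN => ?_, fun hB x y => by simp [N1_eq, hB]⟩
  have hxi : ∀ y, M.normalityDefect y = M.eta y • M.normalityDefect M.xi
      - M.g (M.normalityDefect M.xi) y • M.xi := fun y => by
    have h := M.N1_eq M.xi y
    rw [hN, M.eta_xi, one_smul, ← M.eta_def, eta_normalityDefect, sub_zero] at h
    linear_combination (norm := module) -h
  have hBxi : M.normalityDefect M.xi = 0 := M.eq_zero_of_forall_g_eq_zero fun y => by
    simpa [eta_normalityDefect, M.eta_xi] using congrArg M.eta (hxi y)
  ext y
  simpa [hBxi] using hxi y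

lemma normalityDefect_eq_zero_iff_commute :
    M.normalityDefect = 0 ↔ Commute M.phi M.nablaXi := by
  simp only [LinearMap.ext_iff, commute_iff_eq, Module.End.mul_apply, normalityDefect_apply,
    LinearMap.zero_apply, sub_eq_zero]
  constructor
  · intro h x
    have hxi : M.nablaXi M.xi = 0 := by rw [← h, M.phi_xi, map_zero, map_zero]
    rw [← h (M.phi x), M.phi_sq x, map_sub, map_smul, hxi, smul_zero, sub_zero]
  · intro h x
    rw [← h, M.phi_sq, M.eta_nablaXi, zero_smul, sub_zero]

lemma commute_of_nabla_xi_eq {α β : C}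
    (h : ∀ x, M.nabla x M.xi = α • (x - M.eta x • M.xi) + β • M.phi x) :
    Commute M.phi M.nablaXi := by
  ext x
  simp only [Module.End.mul_apply, nablaXi_apply, h, map_add, map_smul, map_sub, M.phi_xi,
    M.eta_phi, M.phi_sq]
  module

lemma exists_nabla_xi_eq_of_commute (h : Commute M.phi M.nablaXi) :
    ∃ α β : C, ∀ x, M.nabla x M.xi = α • (x - M.eta x • M.xi) + β • M.phi x := by
  have hA : ∀ x, M.nablaXi (M.phi x) = M.phi (M.nablaXi x) := fun x =>
    (LinearMap.congr_fun h x).symm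
  have hAxi : M.nablaXi M.xi = 0 := by
    have h' := M.phi_sq (M.nablaXi M.xi)
    rwa [← hA, M.phi_xi, map_zero, map_zero, M.eta_nablaXi, zero_smul, sub_zero, eq_comm] at h'
  have hAphi2 : ∀ z, M.nablaXi (M.phi (M.phi z)) = M.nablaXi z := fun z => by
    rw [M.phi_sq, map_sub, map_smul, hAxi, smul_zero, sub_zero]
  set G := M.g.comp M.nablaXi
  obtain ⟨k, hk⟩ := M.exists_eq_mul_Phi (G - G.flip)
    (fun y z => by simp only [LinearMap.sub_apply, LinearMap.flip_apply]; ring)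
    (fun z => by simp [G, hAxi, ← M.eta_def, M.eta_nablaXi])
  obtain ⟨s, hs⟩ := M.exists_eq_mul_Phi ((G + G.flip).compl₂ M.phi)
    (fun y z => by
      simp only [G, LinearMap.compl₂_apply, LinearMap.add_apply, LinearMap.flip_apply,
        LinearMap.comp_apply, hA, M.g_phi_left, M.g_symm (M.nablaXi y), M.g_symm (M.nablaXi z)]
      ring)
    (fun z => by simp [G, hAxi, ← M.eta_def, M.eta_nablaXi])
  refine ⟨algebraMap ℝ C 2⁻¹ * s, -(algebraMap ℝ C 2⁻¹ * k), fun y => ?_⟩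
  rw [← nablaXi_apply, ← sub_eq_zero]
  refine M.eq_zero_of_forall_g_eq_zero fun z => ?_
  -- the skew and the symmetric part of `g(∇_yξ, z)` add up to `2 g(∇_yξ, z)`
  have hkyz := hk y z
  have hsyz := hs y (M.phi z)
  simp only [G, LinearMap.compl₂_apply, LinearMap.add_apply, LinearMap.sub_apply,
    LinearMap.flip_apply, LinearMap.comp_apply, hAphi2, Phi_apply, M.g_phi_phi_right,
    M.eta_nablaXi] at hkyz hsyz
  simp only [map_sub, map_add, map_smul, LinearMap.sub_apply, LinearMap.add_apply,
    LinearMap.smul_apply, smul_eq_mul, M.g_xi_left, M.g_phi_left y z]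
  linear_combination algebraMap ℝ C 2⁻¹ * (hkyz + hsyz)
    - M.g (M.nablaXi y) z * inv_two_mul_two (C := C)

lemma nabla_phi_eq_of_nabla_xi_eq {α β : C}
    (h : ∀ x, M.nabla x M.xi = α • (x - M.eta x • M.xi) + β • M.phi x) (x y : X) :
    M.nabla x (M.phi y) - M.phi (M.nabla x y)
      = β • (M.g x y • M.xi - M.eta y • x) + α • (M.g (M.phi x) y • M.xi - M.eta y • M.phi x) := by
  simp only [M.nabla_phi_eq, nablaXi_apply, h, map_add, map_smul, map_sub, M.phi_sq, M.phi_xi,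
    smul_zero, sub_zero, LinearMap.add_apply, LinearMap.smul_apply, LinearMap.sub_apply,
    smul_eq_mul, M.g_xi_left]
  module

lemma nabla_xi_eq_of_nabla_phi_eq {α β : C}
    (h : ∀ x y, M.nabla x (M.phi y) - M.phi (M.nabla x y)
      = β • (M.g x y • M.xi - M.eta y • x) + α • (M.g (M.phi x) y • M.xi - M.eta y • M.phi x))
    (x : X) : M.nabla x M.xi = α • (x - M.eta x • M.xi) + β • M.phi x := by
  have hx := congrArg M.phi (h x M.xi)
  rw [M.phi_xi, M.nabla_zero_right, M.eta_xi, M.g_phi_left, M.phi_xi, map_zero, ← M.eta_def] at hx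
  simp only [map_add, map_smul, map_sub, map_neg, M.phi_sq, M.phi_xi, smul_zero, zero_sub,
    zero_smul, one_smul, M.eta_def (M.nabla x M.xi), M.g_nabla_xi_xi, sub_zero] at hx
  linear_combination (norm := module) -hx

end APCMM3

/-- For a 3-dimensional almost paracontact metric manifold `M`
with Levi-Civita connection `∇`, the following are mutually equivalent:
(a) `M` is normal;
(b) there exist functions `α, β` on `M` with
`(∇_X φ)Y = β(g(X,Y)ξ − η(Y)X) + α(g(φX,Y)ξ − η(Y)φX)` for all `X, Y`;
(c) there exist functions `α, β` on `M` with
`∇_X ξ = α(X − η(X)ξ) + βφX` for all `X`. -/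
theorem normal_iff_nabla_phi_and_iff_nabla_xi (M : APCMM3 C X) :
    (M.Normal ↔ ∃ α β : C, ∀ x y : X,
      M.nabla x (M.phi y) - M.phi (M.nabla x y)
        = β • (M.g x y • M.xi - M.eta y • x)
          + α • (M.g (M.phi x) y • M.xi - M.eta y • M.phi x)) ∧
    (M.Normal ↔ ∃ α β : C, ∀ x : X,
      M.nabla x M.xi = α • (x - M.eta x • M.xi) + β • M.phi x) := by
  have normal_iff_c : M.Normal ↔ ∃ α β : C, ∀ x : X,
      M.nabla x M.xi = α • (x - M.eta x • M.xi) + β • M.phi x := by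
    rw [M.normal_iff_normalityDefect_eq_zero, M.normalityDefect_eq_zero_iff_commute]
    exact ⟨M.exists_nabla_xi_eq_of_commute, fun ⟨α, β, h⟩ => M.commute_of_nabla_xi_eq h⟩
  refine ⟨normal_iff_c.trans ⟨?_, ?_⟩, normal_iff_c⟩
  · exact fun ⟨α, β, h⟩ => ⟨α, β, M.nabla_phi_eq_of_nabla_xi_eq h⟩
  · exact fun ⟨α, β, h⟩ => ⟨α, β, M.nabla_xi_eq_of_nabla_phi_eq h⟩
end

section
/- Let M be a 3-dimensional almost paracontact metric manifold and γ: I → M a slant curve with g(γ̇,γ̇) = ε₁ = ±1 and g(γ̇,ξ) = c. The three vector fields γ̇, φγ̇, ξ along γ are linearly dependent if and only if γ̇ = cξ or γ̇ = cξ ± φγ̇; in that case necessarily ε₁ = 1 and c² = 1. -/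
/-- The data, along a curve `γ : I → M`, of a 3-dimensional almost paracontact
metric manifold `(M, φ, ξ, η, g)`: the pullback tangent bundle is trivialized
over a real vector space `V`; `g t`, `phi t`, `xi t` are the metric, the
structure tensor and the Reeb field at the point `γ t`, and `T t = γ̇(t)` is
the velocity of the curve.  The 1-form `η` is recovered as `η(v) = g v ξ`.
The axioms record: `η(ξ) = 1`, `φξ = 0`, `φ² = Id − η ⊗ ξ`,
`g(φv, φw) = −g(v,w) + η(v)η(w)`, symmetry of `g`, and that `g` has
signature `(2,1)` (an orthonormal basis with signs `(+,+,−)`). -/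
structure APCMCurve (V : Type*) [AddCommGroup V] [Module ℝ V] where
  g : ℝ → V →ₗ[ℝ] V →ₗ[ℝ] ℝ
  phi : ℝ → V →ₗ[ℝ] V
  xi : ℝ → V
  T : ℝ → V
  g_symm : ∀ t v w, g t v w = g t w v
  xi_unit : ∀ t, g t (xi t) (xi t) = 1
  phi_xi : ∀ t, phi t (xi t) = 0
  phi_sq : ∀ t v, phi t (phi t v) = v - g t v (xi t) • xi t
  compat : ∀ t v w, g t (phi t v) (phi t w) = -(g t v w) + g t v (xi t) * g t w (xi t)
  signature : ∀ t, ∃ e : Module.Basis (Fin 3) ℝ V,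
    g t (e 0) (e 0) = 1 ∧ g t (e 1) (e 1) = 1 ∧ g t (e 2) (e 2) = -1 ∧
    g t (e 0) (e 1) = 0 ∧ g t (e 0) (e 2) = 0 ∧ g t (e 1) (e 2) = 0

/-!
Put `u = γ̇ - cξ`. Then `φu = φγ̇`, `φ²γ̇ = u` and `η(φγ̇) = 0`, so pairing a linear relation
among `γ̇, φγ̇, ξ` with `ξ` eliminates `ξ` and leaves a relation between `u` and `φu`. As `φ` is an
involution on `u`, this means `u = 0` or `φu = ±u`, i.e. `γ̇ = cξ + sφγ̇` with `s ∈ {0, 1, -1}`.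
Any such curve has `g(γ̇, γ̇) = c²`, because `g(γ̇, φγ̇) = 0`; hence `ε₁ = c² ≥ 0`, so `ε₁ = 1`.
-/

section LinearAlgebra

variable {R V : Type*}

theorem LinearIndependent.triple_of_pair_sub_smul [CommRing R] [AddCommGroup V] [Module R V]
    (η : V →ₗ[R] R) {x y z : V} (hy : η y = 0) (hz : η z = 1)
    (h : LinearIndependent R ![x - η x • z, y]) : LinearIndependent R ![x, y, z] := by
  rw [Fintype.linearIndependent_iff]
  intro f hf
  simp only [Fin.sum_univ_three, Matrix.cons_val_zero, Matrix.cons_val_one,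
    Matrix.cons_val_two, Matrix.head_cons, Matrix.tail_cons] at hf
  have hf2 : f 2 = -(f 0 * η x) := by
    have := congrArg η hf
    simp only [map_add, map_smul, hy, hz, smul_eq_mul, map_zero] at this
    linear_combination this
  obtain ⟨hf0, hf1⟩ := LinearIndependent.pair_iff.mp h (f 0) (f 1) <| by
    rw [← hf, hf2]
    module
  intro i
  fin_cases i <;> simp [hf0, hf1, hf2]

theorem not_linearIndependent_of_eq_smul_add_smul [CommRing R] [Nontrivial R] [AddCommGroup V]
    [Module R V] {x y z : V} (a b : R) (hx : x = a • z + b • y) :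
    ¬ LinearIndependent R ![x, y, z] := by
  intro h
  have := Fintype.linearIndependent_iff.mp h ![1, -b, -a] (by
    simp only [Fin.sum_univ_three, Matrix.cons_val_zero, Matrix.cons_val_one,
      Matrix.cons_val_two, Matrix.head_cons, Matrix.tail_cons, hx]
    module) 0
  simp at this

theorem LinearMap.eq_zero_or_apply_eq_or_apply_eq_neg_of_not_linearIndependent [Field R]
    [AddCommGroup V] [Module R V] (f : V →ₗ[R] V) {u : V} (hu : f (f u) = u)
    (h : ¬ LinearIndependent R ![u, f u]) : u = 0 ∨ f u = u ∨ f u = -u := by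
  by_cases hu0 : u = 0
  · exact .inl hu0
  obtain ⟨a, ha⟩ : ∃ a : R, a • u = f u := by
    simpa [LinearIndependent.pair_iff' hu0] using h
  have ha2 : a ^ 2 = 1 := by
    have : (a ^ 2 - 1) • u = 0 := by
      rw [sub_smul, one_smul, sq, mul_smul, ha, ← map_smul, ha, hu, sub_self]
    exact sub_eq_zero.mp ((smul_eq_zero.mp this).resolve_right hu0)
  rcases sq_eq_one_iff.mp ha2 with rfl | rfl
  · exact .inr (.inl (by rw [← ha, one_smul]))
  · exact .inr (.inr (by rw [← ha, neg_one_smul]))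

theorem exists_eq_add_smul_of_eq_or_eq_add_or_eq_sub [Ring R] [AddCommGroup V] [Module R V]
    {v w x : V} (h : v = x ∨ v = x + w ∨ v = x - w) : ∃ s : R, v = x + s • w := by
  rcases h with h | h | h
  exacts [⟨0, by simpa using h⟩, ⟨1, by simpa using h⟩, ⟨-1, by simpa [sub_eq_add_neg] using h⟩]

end LinearAlgebra

namespace APCMCurve

variable {V : Type*} [AddCommGroup V] [Module ℝ V] (M : APCMCurve V) (t : ℝ)

theorem xi_ne_zero : M.xi t ≠ 0 := by
  intro h
  simpa [h] using M.xi_unit t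

theorem g_phi_xi (v : V) : M.g t (M.phi t v) (M.xi t) = 0 := by
  have hφ3 : M.phi t (M.phi t (M.phi t v)) = M.phi t v := by
    rw [M.phi_sq t v, map_sub, map_smul, M.phi_xi, smul_zero, sub_zero]
  have h : M.g t (M.phi t v) (M.xi t) • M.xi t = 0 := by
    have := M.phi_sq t (M.phi t v)
    rwa [hφ3, eq_comm, sub_eq_self] at this
  exact (smul_eq_zero.mp h).resolve_right (M.xi_ne_zero t)

theorem g_self_phi (v : V) : M.g t v (M.phi t v) = 0 := by
  have h := M.compat t v (M.phi t v)
  rw [M.g_phi_xi, mul_zero, add_zero, M.phi_sq, map_sub, map_smul, M.g_phi_xi, smul_zero,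
    sub_zero, M.g_symm t (M.phi t v)] at h
  linarith

theorem g_self_eq_sq_of_eq_smul_add_smul {v : V} (a s : ℝ)
    (hv : v = a • M.xi t + s • M.phi t v) : M.g t v v = a ^ 2 := by
  have hη : M.g t v (M.xi t) = a := by
    conv_lhs => rw [hv]
    simp [M.g_phi_xi, M.xi_unit]
  calc M.g t v v = M.g t v (a • M.xi t + s • M.phi t v) := by rw [← hv]
    _ = a * M.g t v (M.xi t) + s * M.g t v (M.phi t v) := by simp
    _ = a ^ 2 := by rw [hη, M.g_self_phi]; ring

theorem eq_of_not_linearIndependent {v : V} {c : ℝ} (hc : M.g t v (M.xi t) = c)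
    (h : ¬ LinearIndependent ℝ ![v, M.phi t v, M.xi t]) :
    v = c • M.xi t ∨ v = c • M.xi t + M.phi t v ∨ v = c • M.xi t - M.phi t v := by
  subst hc
  set u := v - M.g t v (M.xi t) • M.xi t with hu
  have hφu : M.phi t u = M.phi t v := by
    rw [hu, map_sub, map_smul, M.phi_xi, smul_zero, sub_zero]
  have hpair : ¬ LinearIndependent ℝ ![u, M.phi t u] := by
    rw [hφu]
    exact fun hp ↦ h <| LinearIndependent.triple_of_pair_sub_smul ((M.g t).flip (M.xi t))
      (M.g_phi_xi t v)
      (M.xi_unit t) hp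
  have hinv : M.phi t (M.phi t u) = u := by rw [hφu, M.phi_sq]
  rcases (M.phi t).eq_zero_or_apply_eq_or_apply_eq_neg_of_not_linearIndependent hinv hpair
    with h0 | h1 | h2
  · exact .inl (sub_eq_zero.mp h0)
  · refine .inr (.inl ?_)
    rw [hφu, hu] at h1
    rw [h1]
    abel
  · refine .inr (.inr ?_)
    rw [hφu, hu] at h2
    rw [h2]
    abel

end APCMCurve

/-- Let `γ` be a slant curve (`g(γ̇,ξ) = c` constant) in a
3-dimensional almost paracontact metric manifold with `g(γ̇,γ̇) = ε₁ = ±1`.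
The three vector fields `γ̇, φγ̇, ξ` along `γ` are linearly dependent if and
only if `γ̇ = cξ` or `γ̇ = cξ ± φγ̇`; and in that case necessarily `ε₁ = 1`
and `c² = 1`. -/
theorem slant_dependent_iff {V : Type*} [AddCommGroup V] [Module ℝ V]
    (M : APCMCurve V) (e1 c : ℝ) (he1 : e1 = 1 ∨ e1 = -1)
    (hT : ∀ t, M.g t (M.T t) (M.T t) = e1)
    (hslant : ∀ t, M.g t (M.T t) (M.xi t) = c) :
    (∀ t : ℝ, ¬ LinearIndependent ℝ ![M.T t, M.phi t (M.T t), M.xi t] ↔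
      (M.T t = c • M.xi t ∨ M.T t = c • M.xi t + M.phi t (M.T t) ∨
        M.T t = c • M.xi t - M.phi t (M.T t))) ∧
    ((∃ t : ℝ, ¬ LinearIndependent ℝ ![M.T t, M.phi t (M.T t), M.xi t]) →
      e1 = 1 ∧ c ^ 2 = 1) := by
  have hdep (t) (h : ¬ LinearIndependent ℝ ![M.T t, M.phi t (M.T t), M.xi t]) :=
    M.eq_of_not_linearIndependent t (hslant t) h
  refine ⟨fun t ↦ ⟨hdep t, fun h ↦ ?_⟩, fun ⟨t, h⟩ ↦ ?_⟩
  · obtain ⟨s, hs⟩ := exists_eq_add_smul_of_eq_or_eq_add_or_eq_sub (R := ℝ) h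
    exact not_linearIndependent_of_eq_smul_add_smul c s hs
  obtain ⟨s, hs⟩ := exists_eq_add_smul_of_eq_or_eq_add_or_eq_sub (R := ℝ) (hdep t h)
  have hc : c ^ 2 = e1 := hT t ▸ (M.g_self_eq_sq_of_eq_smul_add_smul t c s hs).symm
  rcases he1 with rfl | rfl
  · exact ⟨rfl, hc⟩
  · nlinarith [sq_nonneg c]
end

section
/- On ℝ³ with Cartesian coordinates (x,y,z), define φ∂₁ = ∂₂ − 2x∂₃, φ∂₂ = ∂₁, φ∂₃ = 0, ξ = ∂₃, η = 2x dy + dz. Then [φ,φ](∂ᵢ,∂ⱼ) − 2dη(∂ᵢ,∂ⱼ)ξ = 0 for all 1 ≤ i < j ≤ 3, i.e. this almost paracontact structure is normal. Moreover, on M = ℝ² × ℝ₊ equipped additionally with the Lorentz metric g with matrix [g(∂ᵢ,∂ⱼ)] having rows (−2z, 0, 0), (0, 4x² + 2z, 2x), (0, 2x, 1), the structure functions determined by ∇_X ξ = α(X − η(X)ξ) + βφX equal α = β = (2z)⁻¹, where ∇ is the Levi-Civita connection of g. -/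
noncomputable section

namespace Stmt18

/-- Points/tangent vectors of ℝ³ with coordinates `(x, y, z)`. -/
abbrev V3 : Type := ℝ × ℝ × ℝ

/-- `φ∂₁ = ∂₂ − 2x∂₃`, `φ∂₂ = ∂₁`, `φ∂₃ = 0`. -/
def phi (p v : V3) : V3 := (v.2.1, v.1, -2 * p.1 * v.1)

/-- `ξ = ∂₃`. -/
def xi : V3 := (0, 0, 1)

/-- `η = 2x dy + dz`. -/
def eta (p v : V3) : ℝ := 2 * p.1 * v.2.1 + v.2.2

/-- The Lorentz metric with matrix rows `(−2z,0,0)`, `(0,4x²+2z,2x)`, `(0,2x,1)`. -/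
def g (p v w : V3) : ℝ :=
  -2 * p.2.2 * v.1 * w.1 + (4 * p.1 ^ 2 + 2 * p.2.2) * v.2.1 * w.2.1
    + 2 * p.1 * (v.2.1 * w.2.2 + v.2.2 * w.2.1) + v.2.2 * w.2.2

/-- Lie bracket of vector fields on ℝ³. -/
def bracket (Xf Yf : V3 → V3) : V3 → V3 :=
  fun p => fderiv ℝ Yf p (Xf p) - fderiv ℝ Xf p (Yf p)

/-- `φ` applied to a vector field. -/
def phiV (Xf : V3 → V3) : V3 → V3 := fun p => phi p (Xf p)

/-- The normality tensor `N⁽¹⁾(X,Y) = [φ,φ](X,Y) − 2dη(X,Y)ξ`, with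
`[φ,φ](X,Y) = φ²[X,Y] + [φX,φY] − φ[φX,Y] − φ[X,φY]` and
`2dη(X,Y) = X(η(Y)) − Y(η(X)) − η([X,Y])`. -/
def N1 (Xf Yf : V3 → V3) : V3 → V3 := fun p =>
  phi p (phi p (bracket Xf Yf p)) + bracket (phiV Xf) (phiV Yf) p
    - phi p (bracket (phiV Xf) Yf p) - phi p (bracket Xf (phiV Yf) p)
    - (fderiv ℝ (fun q => eta q (Yf q)) p (Xf p)
        - fderiv ℝ (fun q => eta q (Xf q)) p (Yf p)
        - eta p (bracket Xf Yf p)) • xi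

/-- The coordinate vector fields `∂₁, ∂₂, ∂₃`. -/
def d1 : V3 → V3 := fun _ => (1, 0, 0)
def d2 : V3 → V3 := fun _ => (0, 1, 0)
def d3 : V3 → V3 := fun _ => (0, 0, 1)


open ContinuousLinearMap in
def L3 (a c : ℝ) : V3 →L[ℝ] ℝ :=
  a • fst ℝ ℝ (ℝ × ℝ) + c • ((snd ℝ ℝ ℝ).comp (snd ℝ ℝ (ℝ × ℝ)))

lemma L3_apply (a c : ℝ) (v : V3) : L3 a c v = a * v.1 + c * v.2.2 := by
  simp [L3, smul_eq_mul]

lemma hasFDerivAt_scalar (a c d : ℝ) (p : V3) :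
    HasFDerivAt (fun q : V3 => a * q.1 + c * q.2.2 + d) (L3 a c) p := by
  have h : (fun q : V3 => a * q.1 + c * q.2.2 + d) = fun q => L3 a c q + d := by
    funext q; rw [L3_apply]
  rw [h]
  exact (L3 a c).hasFDerivAt.add_const d

lemma fderiv_scalar (a c d : ℝ) (p v : V3) :
    fderiv ℝ (fun q : V3 => a * q.1 + c * q.2.2 + d) p v = a * v.1 + c * v.2.2 := by
  rw [(hasFDerivAt_scalar a c d p).fderiv, L3_apply]

def Lv (a : ℝ) : V3 →L[ℝ] V3 :=
  (0 : V3 →L[ℝ] ℝ).prod (((0 : V3 →L[ℝ] ℝ)).prod (L3 a 0))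

lemma hasFDerivAt_vec (a c1 c2 c3 : ℝ) (p : V3) :
    HasFDerivAt (fun q : V3 => ((c1, c2, a * q.1 + c3) : V3)) (Lv a) p := by
  have h3 : HasFDerivAt (fun q : V3 => a * q.1 + c3) (L3 a 0) p := by
    have h := hasFDerivAt_scalar a 0 c3 p
    simpa using h
  exact HasFDerivAt.prodMk (hasFDerivAt_const c1 p) (HasFDerivAt.prodMk (hasFDerivAt_const c2 p) h3)

lemma fderiv_vec (a c1 c2 c3 : ℝ) (p v : V3) :
    fderiv ℝ (fun q : V3 => ((c1, c2, a * q.1 + c3) : V3)) p v = (0, 0, a * v.1) := by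
  rw [(hasFDerivAt_vec a c1 c2 c3 p).fderiv]
  simp [Lv, L3_apply]

end Stmt18

open Stmt18 in
/-- The structure `φ∂₁ = ∂₂ − 2x∂₃`, `φ∂₂ = ∂₁`, `φ∂₃ = 0`,
`ξ = ∂₃`, `η = 2x dy + dz` on ℝ³ satisfies `[φ,φ](∂ᵢ,∂ⱼ) − 2dη(∂ᵢ,∂ⱼ)ξ = 0`
for `1 ≤ i < j ≤ 3` (it is normal); moreover on `M = ℝ² × ℝ₊` with the Lorentz
metric `g` above, for any Levi-Civita connection `∇` of `g` (additive,
tensorial in `X`, Leibniz in `Y`, torsion-free and metric on `{z > 0}` for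
smooth vector fields), the functions `α, β` with
`∇_X ξ = α(X − η(X)ξ) + βφX` satisfy `α = β = (2z)⁻¹` on `{z > 0}`. -/
theorem normal_structure_R3_and_alpha_beta :
    (∀ p : V3, N1 d1 d2 p = 0 ∧ N1 d1 d3 p = 0 ∧ N1 d2 d3 p = 0) ∧
    (∀ nabla : (V3 → V3) → (V3 → V3) → (V3 → V3),
      (∀ Xf Yf Zf : V3 → V3, ContDiff ℝ (⊤ : ℕ∞) Xf → ContDiff ℝ (⊤ : ℕ∞) Yf → ContDiff ℝ (⊤ : ℕ∞) Zf →
        ∀ p : V3, 0 < p.2.2 →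
          nabla (fun q => Xf q + Yf q) Zf p = nabla Xf Zf p + nabla Yf Zf p ∧
          nabla Xf (fun q => Yf q + Zf q) p = nabla Xf Yf p + nabla Xf Zf p) →
      (∀ (f : V3 → ℝ) (Xf Yf : V3 → V3),
        ContDiff ℝ (⊤ : ℕ∞) f → ContDiff ℝ (⊤ : ℕ∞) Xf → ContDiff ℝ (⊤ : ℕ∞) Yf →
        ∀ p : V3, 0 < p.2.2 →
          nabla (fun q => f q • Xf q) Yf p = f p • nabla Xf Yf p ∧
          nabla Xf (fun q => f q • Yf q) p
            = fderiv ℝ f p (Xf p) • Yf p + f p • nabla Xf Yf p) →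
      (∀ Xf Yf : V3 → V3, ContDiff ℝ (⊤ : ℕ∞) Xf → ContDiff ℝ (⊤ : ℕ∞) Yf →
        ∀ p : V3, 0 < p.2.2 →
          nabla Xf Yf p - nabla Yf Xf p = bracket Xf Yf p) →
      (∀ Xf Yf Zf : V3 → V3, ContDiff ℝ (⊤ : ℕ∞) Xf → ContDiff ℝ (⊤ : ℕ∞) Yf → ContDiff ℝ (⊤ : ℕ∞) Zf →
        ∀ p : V3, 0 < p.2.2 →
          fderiv ℝ (fun q => g q (Yf q) (Zf q)) p (Xf p)
            = g p (nabla Xf Yf p) (Zf p) + g p (Yf p) (nabla Xf Zf p)) →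
      ∀ α β : V3 → ℝ,
        (∀ Xf : V3 → V3, ContDiff ℝ (⊤ : ℕ∞) Xf → ∀ p : V3, 0 < p.2.2 →
          nabla Xf (fun _ => xi) p
            = α p • (Xf p - eta p (Xf p) • xi) + β p • phi p (Xf p)) →
        ∀ p : V3, 0 < p.2.2 → α p = (2 * p.2.2)⁻¹ ∧ β p = (2 * p.2.2)⁻¹) := by
  constructor
  · intro p
    have ed1 : d1 = fun _ : V3 => (((1:ℝ), (0:ℝ), (0:ℝ)) : V3) := rfl
    have ed2 : d2 = fun _ : V3 => (((0:ℝ), (1:ℝ), (0:ℝ)) : V3) := rfl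
    have ed3 : d3 = fun _ : V3 => (((0:ℝ), (0:ℝ), (1:ℝ)) : V3) := rfl
    have ephi1 : phiV d1 = fun q : V3 => (((0:ℝ), (1:ℝ), (-2) * q.1 + 0) : V3) := by
      funext q; simp [phiV, phi, d1]
    have ephi2 : phiV d2 = fun _ : V3 => (((1:ℝ), (0:ℝ), (0:ℝ)) : V3) := by
      funext q; simp [phiV, phi, d2]
    have ephi3 : phiV d3 = fun _ : V3 => (((0:ℝ), (0:ℝ), (0:ℝ)) : V3) := by
      funext q; simp [phiV, phi, d3]
    have eeta1 : (fun q : V3 => eta q (d1 q)) = fun _ : V3 => (0:ℝ) := by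
      funext q; simp [eta, d1]
    have eeta2 : (fun q : V3 => eta q (d2 q)) = fun q : V3 => 2 * q.1 + 0 * q.2.2 + 0 := by
      funext q; simp [eta, d2]
    have eeta3 : (fun q : V3 => eta q (d3 q)) = fun _ : V3 => (1:ℝ) := by
      funext q; simp [eta, d3]
    refine ⟨?_, ?_, ?_⟩ <;>
    · simp only [N1, bracket]
      simp only [ephi1, ephi2, ephi3, eeta1, eeta2, eeta3]
      simp only [ed1, ed2, ed3]
      simp only [fderiv_vec, fderiv_scalar, fderiv_const]
      simp [phi, eta, xi, Prod.ext_iff]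
  · intro nabla _hadd _hleib htor hmet α β hstr p hp
    have hz : p.2.2 ≠ 0 := ne_of_gt hp
    have cd1 : ContDiff ℝ (⊤ : ℕ∞) d1 := by unfold d1; exact contDiff_const
    have cd2 : ContDiff ℝ (⊤ : ℕ∞) d2 := by unfold d2; exact contDiff_const
    have cxi : ContDiff ℝ (⊤ : ℕ∞) (fun _ : V3 => xi) := contDiff_const
    -- torsion-free facts
    have hb0 : ∀ (u v : V3), bracket (fun _ : V3 => u) (fun _ : V3 => v) p = 0 := by
      intro u v; simp [bracket, fderiv_const]
    have ht1 : nabla (fun _ : V3 => xi) d1 p = nabla d1 (fun _ : V3 => xi) p := by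
      have h := htor d1 (fun _ : V3 => xi) cd1 cxi p hp
      have hb : bracket d1 (fun _ : V3 => xi) p = 0 := by
        rw [show d1 = fun _ : V3 => ((1:ℝ),(0:ℝ),(0:ℝ)) from rfl]; exact hb0 _ _
      rw [hb] at h
      exact (sub_eq_zero.mp h).symm
    have ht2 : nabla (fun _ : V3 => xi) d2 p = nabla d2 (fun _ : V3 => xi) p := by
      have h := htor d2 (fun _ : V3 => xi) cd2 cxi p hp
      have hb : bracket d2 (fun _ : V3 => xi) p = 0 := by
        rw [show d2 = fun _ : V3 => ((0:ℝ),(1:ℝ),(0:ℝ)) from rfl]; exact hb0 _ _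
      rw [hb] at h
      exact (sub_eq_zero.mp h).symm
    have ht12 : nabla d2 d1 p = nabla d1 d2 p := by
      have h := htor d1 d2 cd1 cd2 p hp
      have hb : bracket d1 d2 p = 0 := by
        rw [show d1 = fun _ : V3 => ((1:ℝ),(0:ℝ),(0:ℝ)) from rfl,
            show d2 = fun _ : V3 => ((0:ℝ),(1:ℝ),(0:ℝ)) from rfl]; exact hb0 _ _
      rw [hb] at h
      exact (sub_eq_zero.mp h).symm
    have gsymm : ∀ (v w : V3), g p v w = g p w v := by
      intro v w; simp only [g]; ring
    -- metric compatibility instances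
    have hB : fderiv ℝ (fun q : V3 => g q (d1 q) (d1 q)) p xi
        = g p (nabla (fun _ : V3 => xi) d1 p) (d1 p) + g p (d1 p) (nabla (fun _ : V3 => xi) d1 p) := by
      simpa using hmet (fun _ : V3 => xi) d1 d1 cxi cd1 cd1 p hp
    have hBval : fderiv ℝ (fun q : V3 => g q (d1 q) (d1 q)) p xi = -2 := by
      rw [show (fun q : V3 => g q (d1 q) (d1 q)) = fun q : V3 => 0 * q.1 + (-2) * q.2.2 + 0 by
        funext q; simp [g, d1]]
      rw [fderiv_scalar]; simp [xi]
    have hg1 : g p (nabla d1 (fun _ : V3 => xi) p) (d1 p) = -1 := by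
      rw [hBval, ht1] at hB
      have := gsymm (d1 p) (nabla d1 (fun _ : V3 => xi) p)
      linarith [hB, this]
    -- second equation via full Koszul combination
    have hA2 : fderiv ℝ (fun q : V3 => g q xi (d2 q)) p (d1 p)
        = g p (nabla d1 (fun _ : V3 => xi) p) (d2 p) + g p xi (nabla d1 d2 p) := by
      simpa using hmet d1 (fun _ : V3 => xi) d2 cd1 cxi cd2 p hp
    have hA2val : fderiv ℝ (fun q : V3 => g q xi (d2 q)) p (d1 p) = 2 := by
      rw [show (fun q : V3 => g q xi (d2 q)) = fun q : V3 => 2 * q.1 + 0 * q.2.2 + 0 by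
        funext q; simp [g, d2, xi]]
      rw [fderiv_scalar]; simp [d1]
    have hB2 : fderiv ℝ (fun q : V3 => g q (d1 q) (d2 q)) p xi
        = g p (nabla (fun _ : V3 => xi) d1 p) (d2 p) + g p (d1 p) (nabla (fun _ : V3 => xi) d2 p) := by
      simpa using hmet (fun _ : V3 => xi) d1 d2 cxi cd1 cd2 p hp
    have hB2val : fderiv ℝ (fun q : V3 => g q (d1 q) (d2 q)) p xi = 0 := by
      rw [show (fun q : V3 => g q (d1 q) (d2 q)) = fun _ : V3 => (0:ℝ) by
        funext q; simp [g, d1, d2]]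
      simp [fderiv_const]
    have hC2 : fderiv ℝ (fun q : V3 => g q (d1 q) xi) p (d2 p)
        = g p (nabla d2 d1 p) xi + g p (d1 p) (nabla d2 (fun _ : V3 => xi) p) := by
      simpa using hmet d2 d1 (fun _ : V3 => xi) cd2 cd1 cxi p hp
    have hC2val : fderiv ℝ (fun q : V3 => g q (d1 q) xi) p (d2 p) = 0 := by
      rw [show (fun q : V3 => g q (d1 q) xi) = fun _ : V3 => (0:ℝ) by
        funext q; simp [g, d1, xi]]
      simp [fderiv_const]
    have hg2 : g p (nabla d1 (fun _ : V3 => xi) p) (d2 p) = 1 := by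
      rw [hA2val] at hA2
      rw [hB2val, ht1, ht2] at hB2
      rw [hC2val, ht12] at hC2
      have hs1 := gsymm xi (nabla d1 d2 p)
      linarith [hA2, hB2, hC2, hs1]
    -- use the structure equation
    have hs := hstr d1 cd1 p hp
    rw [hs] at hg1 hg2
    simp only [d1, d2, phi, eta, xi, Prod.smul_mk, Prod.mk_add_mk, Prod.mk_sub_mk,
      smul_eq_mul, g] at hg1 hg2
    constructor
    · field_simp
      nlinarith [hg1]
    · field_simp
      nlinarith [hg2]
end
end
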